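/- Let H be a complex Hilbert space, p₁ ∈ ℂ, and k an H-valued function defined on a neighborhood of p₁ with k(p₁) ≠ 0; set β₁ = k(p₁)/‖k(p₁)‖. Assume there exists k' ∈ H such that (k(p) − k(p₁))/conj(p − p₁) → k' as p → p₁ (p ≠ p₁), and that D := k' − ⟨k', β₁⟩ β₁ ≠ 0. For p near p₁ set α(p) = k(p) − ⟨k(p), β₁⟩ β₁. Then for every fixed θ ∈ ℝ, along the ray p = p₁ + r e^{iθ} with r → 0⁺, one has α(p) ≠ 0 for all sufficiently small r > 0 and α(p)/‖α(p)‖ → e^{−iθ} D/‖D‖ in H. -/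

import Mathlib

/-!
Since `β₁` is the normalization of `k p₁`, the residual `α` vanishes at `p₁`, and as the
residual map is a continuous linear map, `α p / conj (p - p₁) → D`. On the ray
`p = p₁ + r e^{iθ}` one has `conj (p - p₁) = r e^{-iθ}`, so `α p / r → e^{-iθ} D ≠ 0`; hence
`α p ≠ 0` for small `r`, and normalizing discards the positive factor `r`.
-/

open scoped ComplexInnerProductSpace

/-- The unnormalized Gram–Schmidt residual of `v` against the (unit) vector `b`:
`v − ⟨v, b⟩ b` in the paper's convention (inner product linear in the first slot), i.e.
`v − ⟪b, v⟫ • b` in Mathlib's convention. -/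
noncomputable def gsResidual {H : Type*} [NormedAddCommGroup H] [InnerProductSpace ℂ H]
    (b v : H) : H :=
  v - (⟪b, v⟫ : ℂ) • b

open Filter Topology ComplexConjugate

namespace NormedSpace

variable {V : Type*} [NormedAddCommGroup V]

theorem ofReal_inv_norm_smul_eq_normalize [NormedSpace ℂ V] (x : V) :
    (‖x‖ : ℂ)⁻¹ • x = normalize x := by
  rw [normalize, ← Complex.ofReal_inv, Complex.coe_smul]

theorem normalize_smul_of_norm_eq_one [NormedSpace ℂ V] {u : ℂ} (hu : ‖u‖ = 1) (x : V) :
    normalize (u • x) = u • normalize x := by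
  rw [normalize, normalize, norm_smul, hu, one_mul, smul_comm]

variable [NormedSpace ℝ V]

theorem continuousAt_normalize {x : V} (hx : x ≠ 0) : ContinuousAt normalize x :=
  (continuous_norm.continuousAt.inv₀ (norm_ne_zero_iff.mpr hx)).smul continuousAt_id

theorem tendsto_normalize_of_tendsto_inv_smul {ι : Type*} {l : Filter ι} {c : ι → ℝ}
    {f : ι → V} {v : V} (hc : ∀ᶠ i in l, 0 < c i)
    (hf : Tendsto (fun i => (c i)⁻¹ • f i) l (𝓝 v)) (hv : v ≠ 0) :
    (∀ᶠ i in l, f i ≠ 0) ∧ Tendsto (fun i => normalize (f i)) l (𝓝 (normalize v)) := by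
  have hfc : ∀ᶠ i in l, f i = c i • (c i)⁻¹ • f i := by
    filter_upwards [hc] with i hi using (smul_inv_smul₀ hi.ne' _).symm
  constructor
  · filter_upwards [hc, hfc, hf.eventually_ne hv] with i hi hfi hne
    rw [hfi]
    exact smul_ne_zero hi.ne' hne
  · refine ((continuousAt_normalize hv).tendsto.comp hf).congr' ?_
    filter_upwards [hc, hfc] with i hi hfi
    rw [Function.comp_apply, hfi, normalize_smul_of_pos hi, inv_smul_smul₀ hi.ne']

end NormedSpace

section GramSchmidt

variable {H : Type*} [NormedAddCommGroup H] [InnerProductSpace ℂ H]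

noncomputable def gsResidualL (b : H) : H →L[ℂ] H :=
  ContinuousLinearMap.id ℂ H - (innerSL ℂ b).smulRight b

theorem gsResidualL_apply (b v : H) : gsResidualL b v = gsResidual b v := rfl

theorem gsResidual_normalize_self (v : H) : gsResidual ((‖v‖ : ℂ)⁻¹ • v) v = 0 := by
  rcases eq_or_ne v 0 with rfl | hv
  · simp [gsResidual]
  have hn : (‖v‖ : ℂ) ≠ 0 := by exact_mod_cast norm_ne_zero_iff.mpr hv
  rw [gsResidual, inner_smul_left, inner_self_eq_norm_sq_to_K, smul_smul, map_inv₀]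
  simp only [Complex.conj_ofReal, Complex.coe_algebraMap]
  rw [show (‖v‖ : ℂ)⁻¹ * (‖v‖ : ℂ) ^ 2 * (‖v‖ : ℂ)⁻¹ = 1 by field_simp, one_smul, sub_self]

end GramSchmidt

theorem tendsto_ray_nhdsNE (z e : ℂ) (he : e ≠ 0) :
    Tendsto (fun r : ℝ => z + r * e) (𝓝[>] 0) (𝓝[≠] z) := by
  refine tendsto_nhdsWithin_iff.mpr ⟨?_, ?_⟩
  · have : Continuous (fun r : ℝ => z + r * e) := by fun_prop
    simpa using (this.tendsto 0).mono_left nhdsWithin_le_nhds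
  · filter_upwards [self_mem_nhdsWithin] with r (hr : 0 < r)
    simp [he, hr.ne']

theorem stmt17 {H : Type*} [NormedAddCommGroup H] [InnerProductSpace ℂ H]
    (p₁ : ℂ) (k : ℂ → H)
    (β₁ : H) (hβ₁ : β₁ = (‖k p₁‖ : ℂ)⁻¹ • k p₁)
    (k' : H)
    (hk' : Filter.Tendsto (fun p : ℂ => ((starRingEnd ℂ) (p - p₁))⁻¹ • (k p - k p₁))
      (nhdsWithin p₁ {p₁}ᶜ) (nhds k'))
    (D : H) (hD : D = gsResidual β₁ k') (hDne : D ≠ 0)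
    (α : ℂ → H) (hα : ∀ p, α p = gsResidual β₁ (k p)) :
    ∀ θ : ℝ,
      (∀ᶠ r : ℝ in nhdsWithin 0 (Set.Ioi 0),
        α (p₁ + (r : ℂ) * Complex.exp ((θ : ℂ) * Complex.I)) ≠ 0) ∧
      Filter.Tendsto
        (fun r : ℝ =>
          (‖α (p₁ + (r : ℂ) * Complex.exp ((θ : ℂ) * Complex.I))‖ : ℂ)⁻¹ •
            α (p₁ + (r : ℂ) * Complex.exp ((θ : ℂ) * Complex.I)))
        (nhdsWithin 0 (Set.Ioi 0))
        (nhds (Complex.exp (-((θ : ℂ) * Complex.I)) • ((‖D‖ : ℂ)⁻¹ • D))) := by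
  intro θ
  set e := Complex.exp (θ * Complex.I)
  have he : ‖e‖ = 1 := Complex.norm_exp_ofReal_mul_I θ
  have hce : conj e = Complex.exp (-(θ * Complex.I)) := by
    rw [← Complex.exp_conj]
    simp
  have hce₀ : conj e ≠ 0 := hce ▸ Complex.exp_ne_zero _
  have hα₁ : α p₁ = 0 := by rw [hα, hβ₁, gsResidual_normalize_self]
  have hquot : Tendsto (fun p => (conj (p - p₁))⁻¹ • α p) (𝓝[≠] p₁) (𝓝 D) := by
    rw [hD, ← gsResidualL_apply]
    refine (((gsResidualL β₁).continuous.tendsto k').comp hk').congr fun p => ?_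
    simp only [Function.comp_apply, map_smul, map_sub, gsResidualL_apply, ← hα, hα₁, sub_zero]
  have hray : Tendsto (fun r : ℝ => r⁻¹ • α (p₁ + r * e)) (𝓝[>] 0) (𝓝 (conj e • D)) := by
    refine ((hquot.comp (tendsto_ray_nhdsNE p₁ e (Complex.exp_ne_zero _))).const_smul
      (conj e)).congr' ?_
    filter_upwards [self_mem_nhdsWithin] with r (hr : 0 < r)
    simp only [Function.comp_apply, add_sub_cancel_left, map_mul, Complex.conj_ofReal, smul_smul,
      mul_inv, ← mul_assoc]
    rw [mul_right_comm, mul_inv_cancel₀ hce₀, one_mul, ← Complex.ofReal_inv, Complex.coe_smul]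
  obtain ⟨hne, hlim⟩ := NormedSpace.tendsto_normalize_of_tendsto_inv_smul
    self_mem_nhdsWithin hray (smul_ne_zero hce₀ hDne)
  refine ⟨hne, ?_⟩
  simp only [NormedSpace.ofReal_inv_norm_smul_eq_normalize, ← hce]
  rwa [← NormedSpace.normalize_smul_of_norm_eq_one (by simpa using he)]
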